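/- arXiv:math/0601088 — 3 statements merged into one kernel-verified Lean document; each statement's English description precedes it below -/
import Mathlib

section
/- In the fluid model under the utility-maximizing allocation, the cost ψ(N̅(t)) = ∑_r C_r(N̅_r(t)) is non-increasing: at every regular (differentiable) time t, dψ(N̅(t))/dt ≤ ∑_r [U_r(N̅_r(t), ρ_r) − U_r(N̅_r(t), Λ_r(N̅(t)))] ≤ 0. -/
/-!
By the chain rule, `dψ/dt = ∑ r, (ρ r - Λ̅ r) * ∂₂U r (N̅ r, ρ r)`. On a route with `N̅ r > 0` we have
`Λ̅ r = Λ r`, and the gradient inequality for the concave `U r (N̅ r) ·` at `ρ r` bounds the term by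
`U r (N̅ r) (ρ r) - U r (N̅ r) (Λ r)`; on an empty route both sides vanish, as `Λ̅ r = ρ r` and
`U r 0 ≡ 0`. The sum of these bounds is `≤ 0` because `ρ` is feasible and `Λ` is optimal. Only a
right derivative in the allocation is available, so the gradient inequality is proved from it.
-/

open Filter Set Topology

lemma ConcaveOn.le_add_mul_sub_of_hasDerivWithinAt_Ioi {S : Set ℝ} {f : ℝ → ℝ} {x y f' : ℝ}
    (hfc : ConcaveOn ℝ S f) (hS : S ∈ 𝓝[>] x) (hx : x ∈ S) (hy : y ∈ S)
    (hf' : HasDerivWithinAt f f' (Ioi x) x) :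
    f y ≤ f x + f' * (y - x) := by
  rcases lt_trichotomy y x with hyx | rfl | hxy
  · -- `slope f x z ≤ slope f y x` for `z > x` near `x`, and `slope f x z → f'`
    have hle : f' ≤ slope f y x := by
      refine le_of_tendsto ((hasDerivWithinAt_iff_tendsto_slope' self_notMem_Ioi).mp hf') ?_
      filter_upwards [hS, self_mem_nhdsWithin] with z hzS (hxz : x < z)
      rw [slope_def_field, slope_def_field]
      exact hfc.slope_anti_adjacent hy hzS hyx hxz
    rw [slope_def_field, le_div_iff₀ (sub_pos.mpr hyx)] at hle
    linarith
  · simp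
  · have hle := hfc.slope_le_of_hasDerivWithinAt_Ioi hx hy hxy hf'
    rw [slope_def_field, div_le_iff₀ (sub_pos.mpr hxy)] at hle
    linarith

theorem fluid_cost_nonincreasing_general
    {L R : Type*} [Fintype R] [DecidableEq L]
    (route : R → Finset L) (c : L → ℝ)
    (lam ν ρ : R → ℝ) (hν : ∀ r, 0 < ν r) (hρ : ∀ r, ρ r = lam r * ν r)
    -- utilities, derivative in the allocation argument, and costs
    (U : R → ℝ → ℝ → ℝ) (dU : R → ℝ → ℝ → ℝ) (C : R → ℝ → ℝ)
    (hU0 : ∀ r Λ, U r 0 Λ = 0)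
    (hconc : ∀ r x, ConcaveOn ℝ (Set.Ici 0) (U r x))
    (hderiv : ∀ r x Λ, 0 ≤ Λ → HasDerivWithinAt (U r x) (dU r x Λ) (Set.Ici Λ) Λ)
    (hCderiv : ∀ r x, HasDerivAt (C r) (ν r * dU r x (ρ r)) x)
    -- feasible allocation set M, containing ρ
    (M : Set (R → ℝ))
    (hM : M = {Λ | (∀ r, 0 ≤ Λ r) ∧
      ∀ ℓ, ∑ r ∈ Finset.univ.filter (fun r => ℓ ∈ route r), Λ r ≤ c ℓ})
    (hρM : ρ ∈ M)
    -- the fluid state at a regular time t, with utility-maximizing allocation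
    (Nbar : ℝ → (R → ℝ)) (t : ℝ) (hNpos : ∀ r, 0 ≤ Nbar t r)
    (Λopt : R → ℝ) (hΛoptM : Λopt ∈ M)
    (hΛopt : ∀ Λ ∈ M, ∑ r, U r (Nbar t r) (Λ r) ≤ ∑ r, U r (Nbar t r) (Λopt r))
    -- the modified allocation Λ̅ and the fluid dynamics at time t
    (Λb : R → ℝ)
    (hΛb : ∀ r, (0 < Nbar t r → Λb r = Λopt r) ∧ (Nbar t r = 0 → Λb r = ρ r))
    (hdyn : ∀ r, HasDerivAt (fun s => Nbar s r) (lam r - (ν r)⁻¹ * Λb r) t) :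
    HasDerivAt (fun s => ∑ r, C r (Nbar s r))
        (∑ r, (ρ r - Λb r) * dU r (Nbar t r) (ρ r)) t ∧
    (∑ r, (ρ r - Λb r) * dU r (Nbar t r) (ρ r) ≤
      ∑ r, (U r (Nbar t r) (ρ r) - U r (Nbar t r) (Λopt r))) ∧
    (∑ r, (U r (Nbar t r) (ρ r) - U r (Nbar t r) (Λopt r)) ≤ 0) := by
  have hρ_nonneg : ∀ r, 0 ≤ ρ r := (hM ▸ hρM).1
  have hΛopt_nonneg : ∀ r, 0 ≤ Λopt r := (hM ▸ hΛoptM).1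
  refine ⟨HasDerivAt.fun_sum fun r _ => ?_, Finset.sum_le_sum fun r _ => ?_, ?_⟩
  · refine ((hCderiv r (Nbar t r)).comp t (hdyn r)).congr_deriv ?_
    rw [hρ r]
    field_simp [(hν r).ne']
  · rcases (hNpos r).eq_or_lt with hzero | hpos
    · simp [(hΛb r).2 hzero.symm, ← hzero, hU0]
    · have hgrad := (hconc r (Nbar t r)).le_add_mul_sub_of_hasDerivWithinAt_Ioi
        (mem_of_superset self_mem_nhdsWithin (Ioi_subset_Ici (hρ_nonneg r)))
        (hρ_nonneg r) (hΛopt_nonneg r)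
        ((hderiv r (Nbar t r) (ρ r) (hρ_nonneg r)).mono Ioi_subset_Ici_self)
      rw [(hΛb r).1 hpos]
      linarith
  · rw [Finset.sum_sub_distrib, sub_nonpos]
    exact hΛopt ρ hρM

/-- Under the utility-maximizing allocation, the fluid cost
`ψ(N̅(t)) = ∑ r, C r (N̅ r (t))` is non-increasing: at a regular time `t`,
`dψ/dt = ∑ r (ρ r − Λ̅ r) ∂₂U r (N̅_r(t), ρ r)`
`  ≤ ∑ r [U r (N̅_r(t)) (ρ r) − U r (N̅_r(t)) (Λopt r)] ≤ 0`. -/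
theorem fluid_cost_nonincreasing
    {L R : Type*} [Fintype L] [Fintype R] [DecidableEq L]
    (route : R → Finset L) (c : L → ℝ)
    (lam ν ρ : R → ℝ) (hν : ∀ r, 0 < ν r) (hρ : ∀ r, ρ r = lam r * ν r)
    -- utilities, derivative in the allocation argument, and costs
    (U : R → ℝ → ℝ → ℝ) (dU : R → ℝ → ℝ → ℝ) (C : R → ℝ → ℝ)
    (hU0 : ∀ r Λ, U r 0 Λ = 0)
    (hconc : ∀ r x, ConcaveOn ℝ (Set.Ici 0) (U r x))
    (hderiv : ∀ r x Λ, 0 ≤ Λ → HasDerivWithinAt (U r x) (dU r x Λ) (Set.Ici Λ) Λ)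
    (hCderiv : ∀ r x, HasDerivAt (C r) (ν r * dU r x (ρ r)) x)
    -- feasible allocation set M, containing ρ
    (M : Set (R → ℝ))
    (hM : M = {Λ | (∀ r, 0 ≤ Λ r) ∧
      ∀ ℓ, ∑ r ∈ Finset.univ.filter (fun r => ℓ ∈ route r), Λ r ≤ c ℓ})
    (hρM : ρ ∈ M)
    -- the fluid state at a regular time t, with utility-maximizing allocation
    (Nbar : ℝ → (R → ℝ)) (t : ℝ) (hNpos : ∀ r, 0 ≤ Nbar t r)
    (Λopt : R → ℝ) (hΛoptM : Λopt ∈ M)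
    (hΛopt : ∀ Λ ∈ M, ∑ r, U r (Nbar t r) (Λ r) ≤ ∑ r, U r (Nbar t r) (Λopt r))
    -- the modified allocation Λ̅ and the fluid dynamics at time t
    (Λb : R → ℝ)
    (hΛb : ∀ r, (0 < Nbar t r → Λb r = Λopt r) ∧ (Nbar t r = 0 → Λb r = ρ r))
    (hdyn : ∀ r, HasDerivAt (fun s => Nbar s r) (lam r - (ν r)⁻¹ * Λb r) t) :
    HasDerivAt (fun s => ∑ r, C r (Nbar s r))
        (∑ r, (ρ r - Λb r) * dU r (Nbar t r) (ρ r)) t ∧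
    (∑ r, (ρ r - Λb r) * dU r (Nbar t r) (ρ r) ≤
      ∑ r, (U r (Nbar t r) (ρ r) - U r (Nbar t r) (Λopt r))) ∧
    (∑ r, (U r (Nbar t r) (ρ r) - U r (Nbar t r) (Λopt r)) ≤ 0) :=
  fluid_cost_nonincreasing_general route c lam ν ρ hν hρ U dU C hU0 hconc hderiv hCderiv M hM hρM
    Nbar t hNpos Λopt hΛoptM hΛopt Λb hΛb hdyn
end

section
/- For the static planning LP above, the vectors (p, π) with π_ℓ ≥ 0, π_ℓ = 0 for ℓ ∉ L*, ∑_{ℓ∈L*} c_ℓ π_ℓ = 1, and p_r = ∑_{ℓ∈r∩L*} π_ℓ are optimal for the dual LP: minimize ∑_ℓ c_ℓ π_ℓ subject to ∑_r ρ_r p_r ≥ 1, p_r ≤ ∑_{ℓ∈r} π_ℓ, p, π ≥ 0. In particular, ∑_r ρ_r p_r = 1 for such (p, π). -/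
open Finset

lemma swap_sum {L R : Type*} [Fintype L] [Fintype R] [DecidableEq L]
    (S : R → Finset L) (a : R → ℝ) (b : L → ℝ) :
    ∑ r, a r * ∑ ℓ ∈ S r, b ℓ
      = ∑ ℓ, b ℓ * ∑ r ∈ Finset.univ.filter (fun r => ℓ ∈ S r), a r := by
  calc ∑ r, a r * ∑ ℓ ∈ S r, b ℓ
      = ∑ r, ∑ ℓ, if ℓ ∈ S r then a r * b ℓ else 0 := by
        apply Finset.sum_congr rfl; intro r _
        rw [Finset.sum_ite_mem, Finset.univ_inter, Finset.mul_sum]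
    _ = ∑ ℓ, ∑ r, if ℓ ∈ S r then a r * b ℓ else 0 := Finset.sum_comm
    _ = ∑ ℓ, b ℓ * ∑ r ∈ Finset.univ.filter (fun r => ℓ ∈ S r), a r := by
        apply Finset.sum_congr rfl; intro ℓ _
        rw [Finset.mul_sum, Finset.sum_filter]
        apply Finset.sum_congr rfl; intro r _
        split <;> ring

/-- Dual optimality: any `(p, π)` with `π ≥ 0` supported on the bottleneck set
`L*`, normalized so that `∑_{ℓ∈L*} c ℓ π ℓ = 1`, and `p r = ∑_{ℓ∈r∩L*} π ℓ`,
is feasible and optimal for the dual of the static planning LP; moreover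
`∑ r, ρ r * p r = 1`. -/
theorem static_planning_LP_dual_optimal
    {L R : Type*} [Fintype L] [Fintype R] [DecidableEq L]
    (route : R → Finset L) (Lstar : Finset L) (hLstar : Lstar.Nonempty)
    (c : L → ℝ) (hc : ∀ ℓ, 0 < c ℓ) (ρ : R → ℝ) (hρ : ∀ r, 0 < ρ r)
    (hHT1 : ∀ ℓ ∈ Lstar, ∑ r ∈ Finset.univ.filter (fun r => ℓ ∈ route r), ρ r = c ℓ)
    (hHT2 : ∀ ℓ ∉ Lstar, ∑ r ∈ Finset.univ.filter (fun r => ℓ ∈ route r), ρ r < c ℓ)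
    (π : L → ℝ) (hπ : ∀ ℓ, 0 ≤ π ℓ) (hπsupp : ∀ ℓ ∉ Lstar, π ℓ = 0)
    (hπnorm : ∑ ℓ ∈ Lstar, c ℓ * π ℓ = 1)
    (p : R → ℝ) (hp : ∀ r, p r = ∑ ℓ ∈ (route r) ∩ Lstar, π ℓ) :
    let DualFeas : Set ((R → ℝ) × (L → ℝ)) := {q |
      (∀ r, 0 ≤ q.1 r) ∧ (∀ ℓ, 0 ≤ q.2 ℓ) ∧
      1 ≤ ∑ r, ρ r * q.1 r ∧
      (∀ r, q.1 r ≤ ∑ ℓ ∈ route r, q.2 ℓ)}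
    (p, π) ∈ DualFeas ∧
    (∀ q ∈ DualFeas, ∑ ℓ, c ℓ * π ℓ ≤ ∑ ℓ, c ℓ * q.2 ℓ) ∧
    ∑ r, ρ r * p r = 1 := by
  intro DualFeas
  -- key: p r = ∑ ℓ ∈ route r, π ℓ  (since π vanishes off Lstar)
  have hp' : ∀ r, p r = ∑ ℓ ∈ route r, π ℓ := by
    intro r
    rw [hp r, ← Finset.sum_filter_ne_zero]
    symm
    rw [← Finset.sum_filter_ne_zero]
    apply Finset.sum_congr _ (fun _ _ => rfl)
    ext ℓ
    simp only [Finset.mem_filter, Finset.mem_inter]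
    constructor
    · rintro ⟨hℓ, hne⟩
      exact ⟨⟨hℓ, by by_contra h; exact hne (hπsupp ℓ h)⟩, hne⟩
    · rintro ⟨⟨h1, _⟩, hne⟩; exact ⟨h1, hne⟩
  have key : ∑ r, ρ r * p r = 1 := by
    calc ∑ r, ρ r * p r
        = ∑ ℓ, π ℓ * ∑ r ∈ Finset.univ.filter (fun r => ℓ ∈ route r), ρ r := by
          simp_rw [hp']; exact swap_sum route ρ π
      _ = ∑ ℓ ∈ Lstar, π ℓ * ∑ r ∈ Finset.univ.filter (fun r => ℓ ∈ route r), ρ r := by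
          symm; apply Finset.sum_subset (Finset.subset_univ _)
          intro ℓ _ hℓ; rw [hπsupp ℓ hℓ]; ring
      _ = ∑ ℓ ∈ Lstar, c ℓ * π ℓ := by
          apply Finset.sum_congr rfl; intro ℓ hℓ; rw [hHT1 ℓ hℓ]; ring
      _ = 1 := hπnorm
  have hobj : ∑ ℓ, c ℓ * π ℓ = 1 := by
    rw [← hπnorm]
    exact (Finset.sum_subset (Finset.subset_univ _)
      (fun ℓ _ hℓ => by rw [hπsupp ℓ hℓ]; ring)).symm
  refine ⟨⟨?_, hπ, key.ge, ?_⟩, ?_, key⟩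
  · intro r; show 0 ≤ p r
    rw [hp r]
    exact Finset.sum_nonneg fun ℓ _ => hπ ℓ
  · intro r; show p r ≤ ∑ ℓ ∈ route r, π ℓ
    rw [hp r]
    exact Finset.sum_le_sum_of_subset_of_nonneg (Finset.inter_subset_left)
      (fun ℓ _ _ => hπ ℓ)
  · rintro ⟨q1, q2⟩ ⟨hq1, hq2, hfeas, hcons⟩
    rw [hobj]
    calc (1:ℝ) ≤ ∑ r, ρ r * q1 r := hfeas
      _ ≤ ∑ r, ρ r * ∑ ℓ ∈ route r, q2 ℓ := by
          apply Finset.sum_le_sum; intro r _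
          exact mul_le_mul_of_nonneg_left (hcons r) (hρ r).le
      _ = ∑ ℓ, q2 ℓ * ∑ r ∈ Finset.univ.filter (fun r => ℓ ∈ route r), ρ r :=
          swap_sum route ρ q2
      _ ≤ ∑ ℓ, c ℓ * q2 ℓ := by
          apply Finset.sum_le_sum; intro ℓ _
          rw [mul_comm (c ℓ)]
          apply mul_le_mul_of_nonneg_left _ (hq2 ℓ)
          by_cases h : ℓ ∈ Lstar
          · exact (hHT1 ℓ h).le
          · exact (hHT2 ℓ h).le
end

section
/- Let Y^k : [0,∞) → ℝ be a sequence of non-decreasing right-continuous functions converging pointwise at all continuity points of a non-decreasing RCLL limit Y, and let X^k → X uniformly on compacts with X continuous. Suppose for every interval [τ, τ+δ] on which the oscillation of X is less than C, the limit W = X + Y satisfies sup_{t∈[τ,τ+δ]} W(t) ≤ W(τ−) + 2C whenever W(τ−) exists. Then Y is continuous: Y has no jump, since a jump of size C_J > 0 at t_J would force W(t_J+) − W(t) > C_J − 2C > 0 for all t in a left-neighborhood interval with oscillation bound C < C_J/2, contradicting right-continuity of W. -/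
/-!
On a short interval `[t - d, t + d]` on which `X` oscillates by at most `C`, the bound at the
point `t` gives `Y t ≤ Y(t−) + 3C`: the gain `X (t - d) - X t` is at
most `C`, and `sup_{s < t - d} Y s ≤ Y(t−)` by monotonicity. Letting `C → 0` shows that `Y` is
left-continuous, and it is right-continuous by assumption.
-/

open Set Function

theorem ContinuousAt.exists_pos_abs_sub_le_Icc {X : ℝ → ℝ} {t C : ℝ} (hX : ContinuousAt X t)
    (hC : 0 < C) :
    ∃ d > 0, ∀ s ∈ Icc (t - d) (t + d), ∀ u ∈ Icc (t - d) (t + d), |X s - X u| ≤ C := by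
  obtain ⟨δ, hδ, hball⟩ := Metric.continuousAt_iff.1 hX (C / 2) (half_pos hC)
  have hnear : ∀ s ∈ Icc (t - δ / 2) (t + δ / 2), |X s - X t| < C / 2 := fun s hs =>
    hball (by rw [Real.dist_eq, abs_lt]; constructor <;> linarith [hs.1, hs.2])
  refine ⟨δ / 2, half_pos hδ, fun s hs u hu => ?_⟩
  have htri := abs_sub_le (X s) (X t) (X u)
  rw [abs_sub_comm (X t)] at htri
  linarith [hnear s hs, hnear u hu]

theorem Monotone.leftLim_eq_of_regulator_bound {X Y : ℝ → ℝ} {t : ℝ} (hX : ContinuousAt X t)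
    (hY : Monotone Y)
    (hbound : ∀ τ δ C : ℝ, 0 < δ → 0 < C →
      (∀ s ∈ Icc τ (τ + δ), ∀ t ∈ Icc τ (τ + δ), |X s - X t| ≤ C) →
      ∀ t ∈ Icc τ (τ + δ), X t + Y t ≤ (X τ + sSup (Y '' Iio τ)) + 2 * C) :
    leftLim Y t = Y t := by
  refine le_antisymm (hY.leftLim_le le_rfl) (le_of_forall_pos_le_add fun ε hε => ?_)
  obtain ⟨d, hd, hosc⟩ := hX.exists_pos_abs_sub_le_Icc (C := ε / 3) (by positivity)
  have hend : t - d + 2 * d = t + d := by ring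
  have hW := hbound (t - d) (2 * d) (ε / 3) (by positivity) (by positivity) (by rwa [hend]) t
    (by rw [hend]; constructor <;> linarith)
  have hsup : sSup (Y '' Iio (t - d)) ≤ leftLim Y t := by
    rw [← hY.leftLim_eq_sSup]
    exact (hY.leftLim_le le_rfl).trans (hY.le_leftLim (by linarith))
  have hgain := (abs_le.1 (hosc (t - d) ⟨le_rfl, by linarith⟩ t ⟨by linarith, by linarith⟩)).2
  linarith

/-- Continuity of the limiting regulator: let `Y` be non-decreasing and
right-continuous (with left limits, automatic for monotone functions), `X`
continuous, and `W = X + Y`. If on every interval `[τ, τ+δ]` on which the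
oscillation of `X` is at most `C` one has
`W(t) ≤ W(τ−) + 2C` for all `t ∈ [τ, τ+δ]` (where `W(τ−) = X(τ) + Y(τ−)` and
`Y(τ−) = sup_{s<τ} Y(s)`), then `Y` is continuous. -/
theorem regulator_continuous
    (X Y : ℝ → ℝ) (hX : Continuous X)
    (hYmono : Monotone Y)
    (hYright : ∀ t, ContinuousWithinAt Y (Set.Ici t) t)
    (hbound : ∀ τ δ C : ℝ, 0 < δ → 0 < C →
      (∀ s ∈ Set.Icc τ (τ + δ), ∀ t ∈ Set.Icc τ (τ + δ), |X s - X t| ≤ C) →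
      ∀ t ∈ Set.Icc τ (τ + δ),
        X t + Y t ≤ (X τ + sSup (Y '' Set.Iio τ)) + 2 * C) :
    Continuous Y := by
  refine continuous_iff_continuousAt.2 fun t => continuousAt_iff_continuous_left_right.2
    ⟨?_, hYright t⟩
  rw [← continuousWithinAt_Iio_iff_Iic, hYmono.continuousWithinAt_Iio_iff_leftLim_eq]
  exact hYmono.leftLim_eq_of_regulator_bound hX.continuousAt hbound
end
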